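/- arXiv:2605.21828 — 2 statements merged into one kernel-verified Lean document; each statement's English description precedes it below -/
import Mathlib

section
/- (Decay of Chebyshev coefficients in the Bessel order.) Let k ≥ 1 and ℓ ≥ 0 be integers and let 0 ≤ a < b and r > 0 be reals. Then |c_{kℓ}(r)| ≤ 2 e^{e·b·r/2 − k}, where e is Euler's number. -/
/-- The Bessel function of the first kind of nonnegative integer order `n`,
defined by its everywhere-convergent power series. -/
noncomputable def besselJNat (n : ℕ) (x : ℝ) : ℝ :=
  ∑' q : ℕ, (-1 : ℝ) ^ q * (x / 2) ^ (2 * q + n) /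
    ((q.factorial : ℝ) * ((q + n).factorial : ℝ))

/-- The Bessel function of the first kind of integer order. -/
noncomputable def besselJ (n : ℤ) (x : ℝ) : ℝ :=
  if 0 ≤ n then besselJNat n.toNat x else (-1 : ℝ) ^ n * besselJNat (-n).toNat x

/-- The Chebyshev coefficient `c_{kℓ}(r)` of the Bessel function `J_k(ρ r)` for
`ρ ∈ [a, b]`, in its integral form. -/
noncomputable def chebCoef (a b r : ℝ) (k : ℤ) (ℓ : ℕ) : ℝ :=
  2 / Real.pi * ∫ τ in (0 : ℝ)..Real.pi,
    besselJ k ((b - a) * r / 2 * Real.cos τ + (b + a) * r / 2) * Real.cos (ℓ * τ)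


/-!
Integrating the cosine series of `cos (x cos θ)` termwise against `sin θ ^ (2k)` and evaluating
the moments `∫₀^π cos^{2q} sin^{2k}` by their reduction formula gives Poisson's integral
`k! (∫₀^π sin^{2k}) J_k(x) = (x/2)^k ∫₀^π cos (x cos θ) sin^{2k} θ dθ`, hence
`|J_k(x)| ≤ (|x|/2)^k / k!`. Since `(e y)^k / k!` is a term of the series of `exp (e y)`, this
is at most `exp (e |x| / 2 - k)`. In `c_{kℓ}(r)` the argument of `J_k` stays in `[a r, b r]`, and
the factor `2/π` times the length `π` of the interval gives the constant `2`.
-/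

open Real intervalIntegral Nat

noncomputable def cosSinMoment (q k : ℕ) : ℝ :=
  ∫ θ in 0..π, cos θ ^ (2 * q) * sin θ ^ (2 * k)

lemma cosSinMoment_zero_pos (k : ℕ) : 0 < cosSinMoment 0 k := by
  simpa [cosSinMoment] using integral_sin_pow_pos (n := 2 * k)

lemma cosSinMoment_succ (q k : ℕ) :
    (2 * q + 2 * k + 2) * cosSinMoment (q + 1) k = (2 * q + 1) * cosSinMoment q k := by
  -- The derivative of `cos θ ^ (2q+1) * sin θ ^ (2k+1)`, which vanishes at `0` and `π`, is a
  -- combination of two moments once `sin² = 1 - cos²` is used.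
  have hderiv : ∀ θ ∈ Set.uIcc 0 π,
      HasDerivAt (fun θ => cos θ ^ (2 * q + 1) * sin θ ^ (2 * k + 1))
        ((2 * q + 2 * k + 2) * (cos θ ^ (2 * (q + 1)) * sin θ ^ (2 * k))
          - (2 * q + 1) * (cos θ ^ (2 * q) * sin θ ^ (2 * k))) θ := fun θ _ => by
    refine (((hasDerivAt_cos θ).fun_pow (2 * q + 1)).mul
      ((hasDerivAt_sin θ).fun_pow (2 * k + 1))).congr_deriv ?_
    simp only [Nat.add_sub_cancel]
    push_cast
    linear_combination -(2 * (q : ℝ) + 1) * cos θ ^ (2 * q) * sin θ ^ (2 * k) * sin_sq_add_cos_sq θ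
  have hintegrable (p : ℕ) :
      IntervalIntegrable (fun θ => cos θ ^ (2 * p) * sin θ ^ (2 * k)) MeasureTheory.volume 0 π :=
    (by fun_prop : Continuous _).intervalIntegrable _ _
  have hftc := integral_eq_sub_of_hasDerivAt hderiv
    (((hintegrable _).const_mul _).sub ((hintegrable _).const_mul _))
  rw [integral_sub ((hintegrable _).const_mul _) ((hintegrable _).const_mul _),
    integral_const_mul, integral_const_mul] at hftc
  simp only [sin_pi, sin_zero, zero_pow (Nat.succ_ne_zero _), mul_zero, sub_self] at hftc
  rw [cosSinMoment, cosSinMoment]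
  linarith

lemma cosSinMoment_eq (q k : ℕ) :
    4 ^ q * q ! * (q + k)! * cosSinMoment q k = (2 * q)! * k ! * cosSinMoment 0 k := by
  induction q with
  | zero => simp
  | succ q ih =>
    have hrec := cosSinMoment_succ q k
    rw [show 2 * (q + 1) = 2 * q + 1 + 1 by ring, show q + 1 + k = q + k + 1 by ring]
    push_cast [Nat.factorial_succ] at hrec ⊢
    linear_combination (2 * (q + 1 : ℝ)) * 4 ^ q * q ! * (q + k)! * hrec
      + (2 * q + 2 : ℝ) * (2 * q + 1) * ih

lemma hasSum_integral_cos_mul_cos_mul_sin_pow (x : ℝ) (k : ℕ) :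
    HasSum (fun q => (-1) ^ q * x ^ (2 * q) / (2 * q)! * cosSinMoment q k)
      (∫ θ in 0..π, cos (x * cos θ) * sin θ ^ (2 * k)) := by
  have hF : ∀ q θ, ‖(-1) ^ q * (x * cos θ) ^ (2 * q) / (2 * q)! * sin θ ^ (2 * k)‖
      ≤ |x| ^ (2 * q) / (2 * q)! := by
    intro q θ
    simp only [norm_mul, norm_div, norm_pow, norm_neg, norm_one, one_pow, one_mul,
      Real.norm_eq_abs, Nat.abs_cast]
    have hcos : |x| * |cos θ| ≤ |x| := mul_le_of_le_one_right (abs_nonneg x) (abs_cos_le_one θ)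
    calc (|x| * |cos θ|) ^ (2 * q) / (2 * q)! * |sin θ| ^ (2 * k)
        ≤ |x| ^ (2 * q) / (2 * q)! * 1 := by
          gcongr
          exact pow_le_one₀ (abs_nonneg _) (abs_sin_le_one θ)
      _ = |x| ^ (2 * q) / (2 * q)! := mul_one _
  have h := hasSum_integral_of_dominated_convergence (μ := MeasureTheory.volume) (a := 0) (b := π)
    (F := fun q θ => (-1) ^ q * (x * cos θ) ^ (2 * q) / (2 * q)! * sin θ ^ (2 * k))
    (fun q _ => |x| ^ (2 * q) / (2 * q)!)
    (fun q => (by fun_prop : Continuous _).aestronglyMeasurable)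
    (fun q => .of_forall fun θ _ => hF q θ)
    (.of_forall fun _ _ => (hasSum_cosh |x|).summable) intervalIntegrable_const
    (.of_forall fun θ _ => (hasSum_cos (x * cos θ)).mul_right (sin θ ^ (2 * k)))
  refine h.congr_fun fun q => ?_
  rw [cosSinMoment, ← integral_const_mul]
  congr 1 with θ
  ring

theorem besselJNat_mul_eq_integral (k : ℕ) (x : ℝ) :
    k ! * cosSinMoment 0 k * besselJNat k x
      = (x / 2) ^ k * ∫ θ in 0..π, cos (x * cos θ) * sin θ ^ (2 * k) := by
  have hM (q : ℕ) : cosSinMoment q k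
      = (2 * q)! * k ! * cosSinMoment 0 k / (4 ^ q * q ! * (q + k)!) :=
    eq_div_of_mul_eq (by positivity) (by rw [mul_comm]; exact cosSinMoment_eq q k)
  rw [besselJNat, ← tsum_mul_left]
  refine HasSum.tsum_eq ?_
  refine ((hasSum_integral_cos_mul_cos_mul_sin_pow x k).mul_left ((x / 2) ^ k)).congr_fun
    fun q => ?_
  rw [hM q, pow_add, div_pow x 2 (2 * q), pow_mul 2 2 q]
  field_simp
  ring

theorem abs_besselJNat_le (k : ℕ) (x : ℝ) : |besselJNat k x| ≤ |x / 2| ^ k / k ! := by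
  have hM := cosSinMoment_zero_pos k
  have hI : |∫ θ in 0..π, cos (x * cos θ) * sin θ ^ (2 * k)| ≤ cosSinMoment 0 k := by
    refine (abs_integral_le_integral_abs pi_pos.le).trans
      (integral_mono_on pi_pos.le ?_ ?_ fun θ _ => ?_)
    · exact (by fun_prop : Continuous _).intervalIntegrable _ _
    · exact (by fun_prop : Continuous _).intervalIntegrable _ _
    · have hsin : 0 ≤ sin θ ^ (2 * k) := (even_two_mul k).pow_nonneg _
      rw [abs_mul, abs_of_nonneg hsin, pow_zero, one_mul]
      exact mul_le_of_le_one_left hsin (abs_cos_le_one _)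
  rw [le_div_iff₀ (by positivity)]
  refine le_of_mul_le_mul_right ?_ hM
  calc |besselJNat k x| * k ! * cosSinMoment 0 k
        = |k ! * cosSinMoment 0 k * besselJNat k x| := by
        rw [abs_mul, abs_mul, abs_of_pos hM, Nat.abs_cast]; ring
    _ = |x / 2| ^ k * |∫ θ in 0..π, cos (x * cos θ) * sin θ ^ (2 * k)| := by
        rw [besselJNat_mul_eq_integral, abs_mul, abs_pow]
    _ ≤ |x / 2| ^ k * cosSinMoment 0 k := by gcongr

lemma pow_div_factorial_le_exp_mul_sub {y : ℝ} (hy : 0 ≤ y) (k : ℕ) :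
    y ^ k / k ! ≤ exp (exp 1 * y - k) := by
  have h := Real.pow_div_factorial_le_exp (x := exp 1 * y) (mul_nonneg (exp_pos 1).le hy) k
  rw [exp_sub, ← exp_one_pow, le_div_iff₀ (by positivity)]
  calc y ^ k / k ! * exp 1 ^ k = (exp 1 * y) ^ k / k ! := by ring
    _ ≤ exp (exp 1 * y) := h

theorem abs_besselJ_natCast_le_exp (k : ℕ) (x : ℝ) :
    |besselJ k x| ≤ exp (exp 1 * |x| / 2 - k) := by
  rw [besselJ, if_pos (Int.natCast_nonneg k), Int.toNat_natCast, mul_div_assoc, ← abs_two,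
    ← abs_div]
  exact (abs_besselJNat_le k x).trans (pow_div_factorial_le_exp_mul_sub (abs_nonneg _) k)

lemma abs_chebCoef_le {a b r M : ℝ} {k : ℤ} (ℓ : ℕ)
    (h : ∀ τ, |besselJ k ((b - a) * r / 2 * cos τ + (b + a) * r / 2)| ≤ M) :
    |chebCoef a b r k ℓ| ≤ 2 * M := by
  have hbound : ‖∫ τ in 0..π, besselJ k ((b - a) * r / 2 * cos τ + (b + a) * r / 2) * cos (ℓ * τ)‖
      ≤ M * |π - 0| :=
    norm_integral_le_of_norm_le_const fun τ _ => by
      rw [norm_mul, Real.norm_eq_abs, Real.norm_eq_abs]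
      exact (mul_le_of_le_one_right (abs_nonneg _) (abs_cos_le_one _)).trans (h τ)
  rw [chebCoef, abs_mul, abs_of_pos (by positivity)]
  calc 2 / π * |∫ τ in 0..π, besselJ k ((b - a) * r / 2 * cos τ + (b + a) * r / 2) * cos (ℓ * τ)|
      ≤ 2 / π * (M * |π - 0|) := by gcongr; exact hbound
    _ = 2 * M := by rw [sub_zero, abs_of_pos pi_pos]; field_simp

theorem stmt12_general (k : ℕ) (ℓ : ℕ) (a b r : ℝ) (ha : 0 ≤ a) (hab : a < b)
    (hr : 0 < r) :
    |chebCoef a b r (k : ℤ) ℓ| ≤ 2 * Real.exp (Real.exp 1 * b * r / 2 - k) := by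
  refine abs_chebCoef_le ℓ fun τ => (abs_besselJ_natCast_le_exp k _).trans ?_
  have hab' : 0 ≤ (b - a) * r := mul_nonneg (sub_nonneg.2 hab.le) hr.le
  have hx : |(b - a) * r / 2 * cos τ + (b + a) * r / 2| ≤ b * r := by
    refine abs_le.2 ⟨?_, ?_⟩
    · nlinarith [mul_nonneg hab' (neg_le_iff_add_nonneg.1 (neg_one_le_cos τ)), mul_nonneg ha hr.le]
    · nlinarith [mul_nonneg hab' (sub_nonneg.2 (cos_le_one τ))]
  have hx' := mul_le_mul_of_nonneg_left hx (exp_pos 1).le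
  exact exp_le_exp.2 (by linarith)

theorem stmt12 (k : ℕ) (hk : 1 ≤ k) (ℓ : ℕ) (a b r : ℝ) (ha : 0 ≤ a) (hab : a < b)
    (hr : 0 < r) :
    |chebCoef a b r (k : ℤ) ℓ| ≤ 2 * Real.exp (Real.exp 1 * b * r / 2 - k) :=
  stmt12_general k ℓ a b r ha hab hr
end

section
/- (Annulus-to-disk rank bound for the 2D Fourier kernel.) There exists an absolute constant C > 0 such that for all reals 0 ≤ a ≤ b, R > 0, and 0 < ε < 1 with (b−a)·R < 1, there exist a natural number r with r ≤ C·(1 + log(1/ε))·(bR + log(1/ε) + 1) and functions u_1,…,u_r : ℝ² → ℂ and v_1,…,v_r : ℝ² → ℂ such that for every x ∈ ℝ² with ‖x‖ ≤ R and every ω ∈ ℝ² with a ≤ ‖ω‖ ≤ b, one has |e^{i ω·x} − Σ_{ℓ=1}^r u_ℓ(x)·conj(v_ℓ(ω))| ≤ ε. -/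
/-!
Identify the plane with `ℂ` and write `ω = ‖ω‖ e^{iθ}`. With `g = Re (x e^{-iθ})` we have
`ω · x = ‖ω‖ g` and `|g| ≤ R`, and we split `e^{i‖ω‖g} = e^{iag} e^{i(‖ω‖-a)g}`. The first factor is
replaced by its Taylor polynomial of degree `O(bR + log(1/ε))`; the exponent of the second has
modulus at most `(b - a)R ≤ 1`, so degree `O(log(1/ε))` suffices there. Since
`g = (x̄ e^{iθ} + x e^{-iθ}) / 2`, a polynomial of degree `n` in `g` is a Laurent polynomial of
degree `n` in `e^{iθ}` with coefficients depending on `x` alone, hence has separation rank `2n + 1`,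
while the powers of `‖ω‖ - a` depend on `ω` alone.
-/

open Finset Polynomial

open scoped InnerProductSpace Nat ComplexConjugate

section SeparableRank

variable {α β R : Type*} [CommSemiring R]

def SepRankLE (F : α → β → R) (r : ℕ) : Prop :=
  ∃ (u : Fin r → α → R) (v : Fin r → β → R), ∀ x y, F x y = ∑ i, u i x * v i y

theorem SepRankLE.add {F G : α → β → R} {r s : ℕ} (hF : SepRankLE F r) (hG : SepRankLE G s) :
    SepRankLE (fun x y => F x y + G x y) (r + s) := by
  obtain ⟨u, v, hF⟩ := hF
  obtain ⟨u', v', hG⟩ := hG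
  exact ⟨Fin.append u u', Fin.append v v', fun x y => by simp [Fin.sum_univ_add, hF, hG]⟩

theorem SepRankLE.sum {ι : Type*} (s : Finset ι) {F : ι → α → β → R} {r : ι → ℕ}
    (h : ∀ i ∈ s, SepRankLE (F i) (r i)) :
    SepRankLE (fun x y => ∑ i ∈ s, F i x y) (∑ i ∈ s, r i) := by
  classical
  induction s using Finset.induction_on with
  | empty =>
    simp only [sum_empty]
    exact ⟨0, 0, fun _ _ => by simp⟩
  | insert i s hi ih =>
    simp only [sum_insert hi]
    exact (h i (mem_insert_self i s)).add (ih fun j hj => h j (mem_insert_of_mem hj))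

theorem SepRankLE.mul_left {F : α → β → R} {r : ℕ} (c : β → R) (hF : SepRankLE F r) :
    SepRankLE (fun x y => c y * F x y) r := by
  obtain ⟨u, v, hF⟩ := hF
  exact ⟨u, fun i y => c y * v i y, fun x y => by simp only [hF, mul_sum, mul_left_comm]⟩

/-- Since `f w + g w' = (f w² + g) w'`, `p (f w + g w')` is `w'ⁿ` times a polynomial of degree
`2n` in `w` with coefficients depending on `x` only. -/
theorem sepRankLE_eval_add_mul {f g : α → R} {w w' : β → R} (hw : ∀ y, w y * w' y = 1)
    {p : R[X]} {n : ℕ} (hp : p.natDegree ≤ n) :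
    SepRankLE (fun x y => p.eval (f x * w y + g x * w' y)) (2 * n + 1) := by
  set Q : α → R[X] := fun x =>
    ∑ k ∈ range (n + 1), C (p.coeff k) * (C (f x) * X ^ 2 + C (g x)) ^ k * X ^ (n - k)
  have hQ : ∀ x, (Q x).natDegree < 2 * n + 1 := by
    intro x
    have hA : (C (f x) * X ^ 2 + C (g x)).natDegree ≤ 2 := by compute_degree
    refine Nat.lt_succ_of_le (natDegree_sum_le_of_forall_le _ _ fun k hk => ?_)
    have hk := mem_range.1 hk
    calc _ ≤ (C (p.coeff k) * (C (f x) * X ^ 2 + C (g x)) ^ k).natDegree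
          + (X ^ (n - k) : R[X]).natDegree := natDegree_mul_le
      _ ≤ k * 2 + (n - k) := add_le_add ((natDegree_C_mul_le _ _).trans
          (natDegree_pow_le_of_le k hA)) (natDegree_X_pow_le _)
      _ ≤ 2 * n := by omega
  have hpow : ∀ y, ∀ k ≤ n, ∀ a b : R, (a * w y + b * w' y) ^ k
      = (a * w y ^ 2 + b) ^ k * w y ^ (n - k) * w' y ^ n := by
    intro y k hk a b
    obtain ⟨j, rfl⟩ := Nat.exists_eq_add_of_le hk
    have : a * w y + b * w' y = (a * w y ^ 2 + b) * w' y := by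
      rw [add_mul, sq, mul_assoc a, mul_assoc (w y), hw, mul_one]
    rw [this, Nat.add_sub_cancel_left, pow_add, mul_pow, mul_assoc, mul_left_comm (w y ^ j),
      ← mul_pow (w y), hw, one_pow, mul_one]
  have hpQ : ∀ x y, p.eval (f x * w y + g x * w' y) = (Q x).eval (w y) * w' y ^ n := by
    intro x y
    rw [eval_eq_sum_range' (Nat.lt_succ_of_le hp)]
    simp only [Q, eval_finsetSum, eval_mul, eval_C, eval_pow, eval_add, eval_X, sum_mul]
    refine sum_congr rfl fun k hk => ?_
    rw [hpow y k (Nat.le_of_lt_succ (mem_range.1 hk))]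
    ring
  refine ⟨fun m x => (Q x).coeff m, fun m y => w y ^ (m : ℕ) * w' y ^ n, fun x y => ?_⟩
  dsimp only
  rw [hpQ x y, eval_eq_sum_range' (hQ x), sum_mul,
    ← Fin.sum_univ_eq_sum_range (fun m => (Q x).coeff m * w y ^ m * w' y ^ n)]
  simp only [mul_assoc]

theorem sepRankLE_sum_mul_eval {f g : α → R} {w w' : β → R} (hw : ∀ y, w y * w' y = 1)
    (c : ℕ → β → R) {P : ℕ → R[X]} {K n : ℕ} (hP : ∀ l < K, (P l).natDegree ≤ n) :
    SepRankLE (fun x y => ∑ l ∈ range K, c l y * (P l).eval (f x * w y + g x * w' y))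
      (K * (2 * n + 1)) := by
  simpa using SepRankLE.sum (range K) fun l hl =>
    (sepRankLE_eval_add_mul hw (hP l (mem_range.1 hl))).mul_left (c l)

end SeparableRank

section ExpTaylor

variable {𝕜 : Type*} [Field 𝕜]

noncomputable def expTaylor (c : 𝕜) (N : ℕ) : 𝕜[X] := ∑ k ∈ range N, C (c ^ k / k !) * X ^ k

theorem eval_expTaylor (c z : 𝕜) (N : ℕ) :
    (expTaylor c N).eval z = ∑ k ∈ range N, (c * z) ^ k / k ! := by
  simp only [expTaylor, eval_finsetSum, eval_mul, eval_C, eval_pow, eval_X]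
  exact sum_congr rfl fun k _ => by ring

theorem natDegree_expTaylor_le (c : 𝕜) (N : ℕ) : (expTaylor c N).natDegree ≤ N :=
  natDegree_sum_le_of_forall_le _ _ fun _ hk =>
    (natDegree_C_mul_X_pow_le _ _).trans (mem_range.1 hk).le

theorem sum_mul_eval_X_pow_mul_expTaylor (c d z : 𝕜) (N K : ℕ) :
    ∑ l ∈ range K, d ^ l / l ! * (X ^ l * expTaylor c N).eval z
      = (∑ k ∈ range N, (c * z) ^ k / k !) * ∑ l ∈ range K, (d * z) ^ l / l ! := by
  simp only [eval_mul, eval_pow, eval_X, eval_expTaylor, mul_sum, sum_mul]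
  exact sum_congr rfl fun l _ => sum_congr rfl fun k _ => by ring

end ExpTaylor

section TaylorRemainder

theorem pow_div_factorial_le_exp_mul_half_pow {t : ℝ} (ht : 0 ≤ t) {m : ℕ} (hm : 2 * t ≤ m)
    (d : ℕ) : t ^ (m + d) / (m + d)! ≤ Real.exp t * (1 / 2) ^ d := by
  have hfac : (m ! : ℝ) * (m + 1) ^ d ≤ (m + d)! := by
    exact_mod_cast Nat.factorial_mul_pow_le_factorial
  calc t ^ (m + d) / (m + d)! ≤ t ^ (m + d) / (m ! * (m + 1) ^ d) := by gcongr
    _ = t ^ m / m ! * (t / (m + 1)) ^ d := by rw [pow_add, div_pow]; ring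
    _ ≤ Real.exp t * (1 / 2) ^ d := by
        have hratio : t / (m + 1) ≤ 1 / 2 := by
          rw [div_le_div_iff₀ (by positivity) (by norm_num)]
          linarith
        exact mul_le_mul (Real.pow_div_factorial_le_exp t ht m)
          (pow_le_pow_left₀ (by positivity) hratio d) (by positivity) (Real.exp_pos t).le

theorem norm_exp_sub_sum_range_le {z : ℂ} {t : ℝ} (hz : ‖z‖ ≤ t) {m : ℕ} (hm : 2 * t ≤ m)
    (d : ℕ) :
    ‖Complex.exp z - ∑ k ∈ range (m + d), (z ^ k / k !)‖ ≤ 2 * Real.exp t * (1 / 2) ^ d := by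
  have ht : 0 ≤ t := (norm_nonneg z).trans hz
  have hbound : ‖z‖ / (m + d).succ ≤ 1 / 2 := by
    rw [div_le_div_iff₀ (by positivity) (by norm_num)]
    push_cast
    linarith [(Nat.cast_nonneg d : (0 : ℝ) ≤ d)]
  calc _ ≤ ‖z‖ ^ (m + d) / (m + d)! * 2 := Complex.exp_bound' hbound
    _ ≤ t ^ (m + d) / (m + d)! * 2 := by gcongr
    _ ≤ 2 * Real.exp t * (1 / 2) ^ d := by
        linarith [pow_div_factorial_le_exp_mul_half_pow ht hm d]

theorem half_pow_two_mul_ceil_le_exp_neg (t : ℝ) :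
    (1 / 2 : ℝ) ^ (2 * ⌈t⌉₊) ≤ Real.exp (-t) := by
  have hquarter : (1 / 4 : ℝ) ≤ Real.exp (-1) := by
    rw [Real.exp_neg, le_inv_comm₀ (by norm_num) (Real.exp_pos 1)]
    linarith [Real.exp_one_lt_d9]
  calc (1 / 2 : ℝ) ^ (2 * ⌈t⌉₊) = (1 / 4) ^ ⌈t⌉₊ := by rw [pow_mul]; norm_num
    _ ≤ Real.exp (-1) ^ ⌈t⌉₊ := by gcongr
    _ = Real.exp (-⌈t⌉₊) := by rw [← Real.exp_nat_mul]; ring_nf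
    _ ≤ Real.exp (-t) := by gcongr; exact Nat.le_ceil t

/-- Number of Taylor terms after which `exp` is `ε / 8`-accurate on the disk of radius `T`. -/
noncomputable def expDegree (T ε : ℝ) : ℕ := 4 * ⌈T⌉₊ + 2 * ⌈Real.log (1 / ε)⌉₊ + 4

theorem norm_exp_sub_sum_range_expDegree_le {z : ℂ} {T ε : ℝ} (hz : ‖z‖ ≤ T) (hε : 0 < ε) :
    ‖Complex.exp z - ∑ k ∈ range (expDegree T ε), (z ^ k / k !)‖ ≤ ε / 8 := by
  have hsplit : expDegree T ε = 2 * ⌈T⌉₊ + (2 * ⌈T⌉₊ + 2 * ⌈Real.log (1 / ε)⌉₊ + 4) := by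
    unfold expDegree; ring
  have hT := half_pow_two_mul_ceil_le_exp_neg T
  have hL := half_pow_two_mul_ceil_le_exp_neg (Real.log (1 / ε))
  rw [show Real.exp (-Real.log (1 / ε)) = ε by
    rw [one_div, Real.log_inv, neg_neg, Real.exp_log hε]] at hL
  rw [hsplit]
  refine (norm_exp_sub_sum_range_le hz (by push_cast; linarith [Nat.le_ceil T]) _).trans ?_
  calc 2 * Real.exp T * (1 / 2) ^ (2 * ⌈T⌉₊ + 2 * ⌈Real.log (1 / ε)⌉₊ + 4)
      = 2 * Real.exp T * ((1 / 2) ^ (2 * ⌈T⌉₊) * (1 / 2) ^ (2 * ⌈Real.log (1 / ε)⌉₊) / 16) := by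
        rw [pow_add, pow_add]; ring
    _ ≤ 2 * Real.exp T * (Real.exp (-T) * ε / 16) := by gcongr
    _ = ε / 8 := by rw [Real.exp_neg]; field_simp; ring

theorem expDegree_le {T ε : ℝ} (hT : 0 ≤ T) (hε : 0 < ε) (hε1 : ε ≤ 1) :
    (expDegree T ε : ℝ) ≤ 4 * T + 2 * Real.log (1 / ε) + 10 := by
  have hL : 0 ≤ Real.log (1 / ε) := Real.log_nonneg (by rw [le_div_iff₀ hε]; linarith)
  unfold expDegree
  push_cast
  linarith [Nat.ceil_lt_add_one hT, Nat.ceil_lt_add_one hL]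

theorem cast_expDegree_one_mul_le {T ε : ℝ} (hT : 0 ≤ T) (hε : 0 < ε) (hε1 : ε ≤ 1) :
    ((expDegree 1 ε * (2 * (expDegree T ε + expDegree 1 ε) + 1) : ℕ) : ℝ)
      ≤ 686 * (1 + Real.log (1 / ε)) * (T + Real.log (1 / ε) + 1) := by
  have hL : 0 ≤ Real.log (1 / ε) := Real.log_nonneg (by rw [le_div_iff₀ hε]; linarith)
  have hK := expDegree_le zero_le_one hε hε1
  have hN := expDegree_le hT hε hε1
  push_cast
  calc (expDegree 1 ε : ℝ) * (2 * (expDegree T ε + expDegree 1 ε) + 1)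
      ≤ (2 * Real.log (1 / ε) + 14) * (8 * T + 8 * Real.log (1 / ε) + 49) :=
        mul_le_mul (by linarith) (by linarith) (by positivity) (by linarith)
    _ ≤ 686 * (1 + Real.log (1 / ε)) * (T + Real.log (1 / ε) + 1) := by nlinarith

end TaylorRemainder

theorem norm_mul_sub_mul_le {A : Type*} [SeminormedRing A] {a b p q : A} (ha : ‖a‖ ≤ 1)
    (hb : ‖b‖ ≤ 1) : ‖a * b - p * q‖ ≤ ‖a - p‖ * (1 + ‖b - q‖) + ‖b - q‖ := by
  have hq : ‖q‖ ≤ 1 + ‖b - q‖ := by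
    calc ‖q‖ = ‖b - (b - q)‖ := by rw [sub_sub_cancel]
      _ ≤ ‖b‖ + ‖b - q‖ := norm_sub_le _ _
      _ ≤ 1 + ‖b - q‖ := by linarith
  calc ‖a * b - p * q‖ = ‖(a - p) * q + a * (b - q)‖ := by congr 1; noncomm_ring
    _ ≤ ‖a - p‖ * ‖q‖ + ‖a‖ * ‖b - q‖ := (norm_add_le _ _).trans (add_le_add
          (norm_mul_le _ _) (norm_mul_le _ _))
    _ ≤ ‖a - p‖ * (1 + ‖b - q‖) + 1 * ‖b - q‖ := by gcongr
    _ = ‖a - p‖ * (1 + ‖b - q‖) + ‖b - q‖ := by rw [one_mul]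

theorem norm_exp_add_sub_mul_le {z₁ z₂ : ℂ} {T ε : ℝ} (h₁ : z₁.re ≤ 0) (h₂ : z₂.re ≤ 0)
    (hz₁ : ‖z₁‖ ≤ T) (hz₂ : ‖z₂‖ ≤ 1) (hε : 0 < ε) (hε1 : ε ≤ 1) :
    ‖Complex.exp (z₁ + z₂) - (∑ k ∈ range (expDegree T ε), z₁ ^ k / k !) *
      ∑ l ∈ range (expDegree 1 ε), (z₂ ^ l / l !)‖ ≤ ε := by
  have hA := norm_exp_sub_sum_range_expDegree_le hz₁ hε
  have hB := norm_exp_sub_sum_range_expDegree_le hz₂ hε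
  rw [Complex.exp_add]
  refine (norm_mul_sub_mul_le (by simpa [Complex.norm_exp] using h₁)
    (by simpa [Complex.norm_exp] using h₂)).trans ?_
  calc _ ≤ ε / 8 * (1 + ε / 8) + ε / 8 := by gcongr
    _ ≤ ε := by nlinarith

section Annulus

variable {G : Type*} [SeminormedAddCommGroup G] [InnerProductSpace ℝ G] (f : G ≃ₗᵢ[ℝ] ℂ)

noncomputable def phase (ω : G) : ℂ := Complex.exp (Complex.arg (f ω) * Complex.I)

theorem conj_phase_mul_phase (ω : G) : conj (phase f ω) * phase f ω = 1 := by
  simp [phase, Complex.conj_mul', Complex.norm_exp_ofReal_mul_I]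

theorem inner_eq_norm_mul_re_mul_conj_phase (x ω : G) :
    ⟪ω, x⟫_ℝ = ‖ω‖ * (f x * conj (phase f ω)).re := by
  rw [inner_map_complex f]
  conv_lhs => rw [← Complex.norm_mul_exp_arg_mul_I (f ω)]
  rw [map_mul, Complex.conj_ofReal, mul_left_comm, Complex.re_ofReal_mul, f.norm_map, phase]

/-- The product of the Taylor polynomials of `exp (i a g)` and `exp (i (‖ω‖ - a) g)`, written in
terms of `g = Re (f x * conj (phase f ω))`, the component of `x` along `ω`. -/
noncomputable def annulusApprox (a : ℝ) (K N : ℕ) (x ω : G) : ℂ :=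
  ∑ l ∈ range K, (((‖ω‖ - a : ℝ) : ℂ) * Complex.I) ^ l / l ! *
    (X ^ l * expTaylor ((a : ℂ) * Complex.I) N).eval
      (f x / 2 * conj (phase f ω) + conj (f x) / 2 * phase f ω)

theorem sepRankLE_annulusApprox (a : ℝ) (K N : ℕ) :
    SepRankLE (annulusApprox f a K N) (K * (2 * (N + K) + 1)) :=
  sepRankLE_sum_mul_eval (conj_phase_mul_phase f) _ fun l hl =>
    natDegree_mul_le.trans (by
      have := natDegree_expTaylor_le ((a : ℂ) * Complex.I) N
      rw [natDegree_X_pow]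
      omega)

theorem norm_exp_inner_sub_annulusApprox_le {a b R ε : ℝ} (ha : 0 ≤ a) (hbaR : (b - a) * R ≤ 1)
    (hε : 0 < ε) (hε1 : ε ≤ 1) {x ω : G} (hx : ‖x‖ ≤ R) (haω : a ≤ ‖ω‖) (hωb : ‖ω‖ ≤ b) :
    ‖Complex.exp (Complex.I * ⟪ω, x⟫_ℝ) -
      annulusApprox f a (expDegree 1 ε) (expDegree (b * R) ε) x ω‖ ≤ ε := by
  set g := (f x * conj (phase f ω)).re
  have hg : (g : ℂ) = f x / 2 * conj (phase f ω) + conj (f x) / 2 * phase f ω := by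
    rw [Complex.re_eq_add_conj, map_mul, Complex.conj_conj]
    ring
  have hgR : |g| ≤ R := by
    refine (Complex.abs_re_le_norm _).trans ?_
    simpa [phase, f.norm_map, Complex.norm_exp_ofReal_mul_I] using hx
  have hz₁ : ‖(a : ℂ) * Complex.I * g‖ ≤ b * R := by
    rw [norm_mul, norm_mul, Complex.norm_I, mul_one, Complex.norm_real, Complex.norm_real,
      Real.norm_of_nonneg ha, Real.norm_eq_abs]
    exact mul_le_mul (haω.trans hωb) hgR (abs_nonneg g) (ha.trans (haω.trans hωb))
  have hz₂ : ‖((‖ω‖ - a : ℝ) : ℂ) * Complex.I * g‖ ≤ 1 := by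
    rw [norm_mul, norm_mul, Complex.norm_I, mul_one, Complex.norm_real, Complex.norm_real,
      Real.norm_of_nonneg (sub_nonneg.2 haω), Real.norm_eq_abs]
    nlinarith [mul_le_mul (sub_le_sub_right hωb a) hgR (abs_nonneg g) (by linarith)]
  rw [annulusApprox, ← hg, sum_mul_eval_X_pow_mul_expTaylor,
    inner_eq_norm_mul_re_mul_conj_phase f]
  convert norm_exp_add_sub_mul_le (by simp) (by simp) hz₁ hz₂ hε hε1 using 4
  push_cast
  ring

end Annulus

theorem stmt13 :
    ∃ C : ℝ, 0 < C ∧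
      ∀ a b R ε : ℝ, 0 ≤ a → a ≤ b → 0 < R → 0 < ε → ε < 1 → (b - a) * R < 1 →
        ∃ r : ℕ,
          (r : ℝ) ≤ C * (1 + Real.log (1 / ε)) * (b * R + Real.log (1 / ε) + 1) ∧
          ∃ u v : Fin r → EuclideanSpace ℝ (Fin 2) → ℂ,
            ∀ x ω : EuclideanSpace ℝ (Fin 2), ‖x‖ ≤ R → a ≤ ‖ω‖ → ‖ω‖ ≤ b →
              ‖Complex.exp (Complex.I * (⟪ω, x⟫_ℝ : ℝ)) -
                ∑ ℓ : Fin r, u ℓ x * (starRingEnd ℂ) (v ℓ ω)‖ ≤ ε := by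
  refine ⟨686, by norm_num, fun a b R ε ha hab hR hε hε1 hbaR => ?_⟩
  let f := Complex.orthonormalBasisOneI.repr.symm
  obtain ⟨u, v, huv⟩ := sepRankLE_annulusApprox f a (expDegree 1 ε) (expDegree (b * R) ε)
  refine ⟨_, cast_expDegree_one_mul_le (mul_nonneg (ha.trans hab) hR.le) hε hε1.le,
    u, fun i ω => conj (v i ω), fun x ω hx haω hωb => ?_⟩
  simpa only [Complex.conj_conj, ← huv] using
    norm_exp_inner_sub_annulusApprox_le f ha hbaR.le hε hε1.le hx haω hωb
end
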